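/- arXiv:1702.06190 — 5 statements merged into one kernel-verified Lean document; each statement's English description precedes it below -/
import Mathlib

section
/- Let m ∈ ℕ, F ∈ C(m) and ε ≥ 0. Then for every n ∈ ℕ with n ≥ 1, the ε-rotation set satisfies ρ_ε(F) ⊆ Conv(K_n^ε(F)). -/
open Metric Set Pointwise

noncomputable section

abbrev E (m : ℕ) := EuclideanSpace ℝ (Fin m)

def cube (m : ℕ) : Set (E m) := {x | ∀ i, x i ∈ Set.Icc (0:ℝ) 1}

def intVec {m : ℕ} (t : Fin m → ℤ) : E m := WithLp.toLp 2 (fun i => (t i : ℝ))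

def IsLift {m : ℕ} (F : E m → E m) : Prop :=
  Continuous F ∧ ∀ (x : E m) (t : Fin m → ℤ), F (x + intVec t) = F x + intVec t

def IsHomeoLift {m : ℕ} (F : E m → E m) : Prop :=
  IsLift F ∧ ∃ h : (E m) ≃ₜ (E m), ⇑h = F

def Kset {m : ℕ} (F : E m → E m) (k : ℕ) : Set (E m) :=
  {v | ∃ x ∈ cube m, v = (k : ℝ)⁻¹ • (F^[k] x - x)}

def rotSet {m : ℕ} (F : E m → E m) : Set (E m) :=
  ⋂ n ≥ 1, closure (⋃ k ≥ n, Kset F k)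

def IsPseudoOrbit {m : ℕ} (F : E m → E m) (ε : ℝ) (n : ℕ) (ξ : ℕ → E m) : Prop :=
  ∀ j < n, ‖F (ξ j) - ξ (j + 1)‖ ≤ ε

def KsetEps {m : ℕ} (F : E m → E m) (ε : ℝ) (k : ℕ) : Set (E m) :=
  {v | ∃ ξ : ℕ → E m, IsPseudoOrbit F ε k ξ ∧ ξ 0 ∈ cube m ∧ v = (k : ℝ)⁻¹ • (ξ k - ξ 0)}

def rotSetEps {m : ℕ} (F : E m → E m) (ε : ℝ) : Set (E m) :=
  ⋂ n ≥ 1, closure (⋃ k ≥ n, KsetEps F ε k)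

/-
A pseudo-orbit of length `k ≥ n` splits into `⌊k/n⌋` consecutive windows of length `n` and a
remainder of length `< n`. Translated back to the unit cube by an integer vector, each window is
a pseudo-orbit starting in `[0,1]^m`, so its average displacement lies in `K_n^ε(F)`; the average
over the windows is a convex combination of these. Since `F - id` is periodic, hence bounded, every
step of a pseudo-orbit has length at most some `C`, and the average displacement over `k` steps
differs from the average over the windows by at most `2nC/k`. Letting `k → ∞` puts `ρ_ε(F)` in the
closure of the convex hull.
-/

open Filter

section BlockAverages

variable {V : Type*} [SeminormedAddCommGroup V]

lemma norm_sub_le_mul_of_norm_succ_sub_le {ξ : ℕ → V} {C : ℝ} {k a b : ℕ}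
    (hstep : ∀ j < k, ‖ξ (j + 1) - ξ j‖ ≤ C) (hab : a ≤ b) (hbk : b ≤ k) :
    ‖ξ b - ξ a‖ ≤ ((b : ℝ) - a) * C :=
  calc ‖ξ b - ξ a‖ = dist (ξ a) (ξ b) := by rw [dist_comm, dist_eq_norm]
    _ ≤ ∑ i ∈ Finset.Ico a b, dist (ξ i) (ξ (i + 1)) := dist_le_Ico_sum_dist ξ hab
    _ ≤ ∑ _i ∈ Finset.Ico a b, C := Finset.sum_le_sum fun i hi => by
        rw [dist_comm, dist_eq_norm]
        exact hstep i (by rw [Finset.mem_Ico] at hi; omega)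
    _ = ((b : ℝ) - a) * C := by simp [Nat.cast_sub hab]

variable [NormedSpace ℝ V]

lemma norm_inv_smul_sub_inv_smul_le {a b : V} {K L C : ℝ} (hL : 0 < L) (hLK : L ≤ K)
    (hab : ‖a - b‖ ≤ (K - L) * C) (hb : ‖b‖ ≤ L * C) :
    ‖K⁻¹ • a - L⁻¹ • b‖ ≤ 2 * (K - L) * C / K := by
  have hK : 0 < K := hL.trans_le hLK
  have hcoef : 0 ≤ L⁻¹ - K⁻¹ := sub_nonneg.mpr (inv_anti₀ hL hLK)
  calc ‖K⁻¹ • a - L⁻¹ • b‖ = ‖K⁻¹ • (a - b) - (L⁻¹ - K⁻¹) • b‖ := by congr 1; module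
    _ ≤ K⁻¹ * ((K - L) * C) + (L⁻¹ - K⁻¹) * (L * C) := by
        refine (norm_sub_le _ _).trans (add_le_add ?_ ?_) <;>
          rw [norm_smul, Real.norm_of_nonneg (by positivity)] <;> gcongr
    _ = 2 * (K - L) * C / K := by field_simp; ring

lemma exists_mem_convexHull_window_averages {ξ : ℕ → V} {C : ℝ} {n k : ℕ}
    (hstep : ∀ j < k, ‖ξ (j + 1) - ξ j‖ ≤ C) (hn : 0 < n) (hnk : n ≤ k) :
    ∃ y ∈ convexHull ℝ {v | ∃ a, a + n ≤ k ∧ v = (n : ℝ)⁻¹ • (ξ (a + n) - ξ a)},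
      ‖(k : ℝ)⁻¹ • (ξ k - ξ 0) - y‖ ≤ 2 * n * C / k := by
  have hq : 0 < k / n := Nat.div_pos hnk hn
  have hdivmod := Nat.div_add_mod' k n
  have hmod := Nat.mod_lt k hn
  generalize k / n = q at hq hdivmod
  generalize k % n = r at hdivmod hmod
  have hqn : q * n ≤ k := by omega
  have hrem : k - q * n < n := by omega
  have hC : 0 ≤ C := (norm_nonneg _).trans (hstep 0 (hn.trans_le hnk))
  refine ⟨((q * n : ℕ) : ℝ)⁻¹ • (ξ (q * n) - ξ 0), ?_, ?_⟩
  · have hcenter : ((q * n : ℕ) : ℝ)⁻¹ • (ξ (q * n) - ξ 0) = (Finset.range q).centerMass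
        (fun _ => (1 : ℝ)) (fun j => (n : ℝ)⁻¹ • (ξ ((j + 1) * n) - ξ (j * n))) := by
      have htelescope := Finset.sum_range_sub (fun j => ξ (j * n)) q
      simp only [Finset.centerMass, one_smul, ← Finset.smul_sum, htelescope]
      simp [smul_smul, mul_comm]
    rw [hcenter]
    refine Finset.centerMass_mem_convexHull _ (fun _ _ => zero_le_one) (by simpa using hq)
      fun j hj => ⟨j * n, ?_, by rw [Nat.succ_mul]⟩
    have := Finset.mem_range.mp hj
    nlinarith
  · have hwhole := norm_sub_le_mul_of_norm_succ_sub_le hstep (Nat.zero_le _) hqn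
    have htail := norm_sub_le_mul_of_norm_succ_sub_le hstep hqn le_rfl
    have hqn_pos : (0 : ℝ) < (q * n : ℕ) := by positivity
    have hqn_le : ((q * n : ℕ) : ℝ) ≤ k := by exact_mod_cast hqn
    have hrem' : (k : ℝ) - (q * n : ℕ) ≤ n := by
      rw [← Nat.cast_sub hqn]; exact_mod_cast hrem.le
    calc ‖(k : ℝ)⁻¹ • (ξ k - ξ 0) - ((q * n : ℕ) : ℝ)⁻¹ • (ξ (q * n) - ξ 0)‖
        ≤ 2 * ((k : ℝ) - (q * n : ℕ)) * C / k :=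
          norm_inv_smul_sub_inv_smul_le hqn_pos hqn_le (by simpa using htail)
            (by simpa using hwhole)
      _ ≤ 2 * n * C / k := by gcongr

end BlockAverages

lemma isCompact_cube (m : ℕ) : IsCompact (cube m) := by
  have : cube m = WithLp.toLp 2 '' Set.pi univ (fun _ : Fin m => Icc (0 : ℝ) 1) := by
    ext x
    exact ⟨fun h => ⟨x.ofLp, fun i _ => h i, rfl⟩, by rintro ⟨y, hy, rfl⟩ i; exact hy i (mem_univ i)⟩
  rw [this]
  exact (isCompact_univ_pi fun _ => isCompact_Icc).image (PiLp.continuous_toLp 2 _)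

lemma sub_intVec_floor_mem_cube {m : ℕ} (y : E m) : y - intVec (fun i => ⌊y i⌋) ∈ cube m := by
  intro i
  have hi : (y - intVec (fun i => ⌊y i⌋)) i = y i - ⌊y i⌋ := by simp [intVec]
  rw [hi]
  exact ⟨sub_nonneg.mpr (Int.floor_le _), by linarith [Int.lt_floor_add_one (y i)]⟩

namespace IsLift

variable {m : ℕ} {F : E m → E m}

lemma exists_norm_map_sub_le (hF : IsLift F) : ∃ M : ℝ, ∀ y, ‖F y - y‖ ≤ M := by
  obtain ⟨M, hM⟩ := (isCompact_cube m).exists_bound_of_continuousOn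
    (hF.1.sub continuous_id).norm.continuousOn
  refine ⟨M, fun y => ?_⟩
  have hshift := hF.2 (y - intVec fun i => ⌊y i⌋) (fun i => ⌊y i⌋)
  rw [sub_add_cancel] at hshift
  have hperiodic : F y - y = F (y - intVec fun i => ⌊y i⌋) - (y - intVec fun i => ⌊y i⌋) := by
    rw [hshift]; abel
  simpa [hperiodic] using hM _ (sub_intVec_floor_mem_cube y)

lemma window_average_mem_KsetEps (hF : IsLift F) {ε : ℝ} {k n a : ℕ} {ξ : ℕ → E m}
    (hξ : IsPseudoOrbit F ε k ξ) (hak : a + n ≤ k) :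
    (n : ℝ)⁻¹ • (ξ (a + n) - ξ a) ∈ KsetEps F ε n := by
  set t : Fin m → ℤ := fun i => ⌊ξ a i⌋
  refine ⟨fun j => ξ (a + j) - intVec t, fun j hj => ?_, sub_intVec_floor_mem_cube (ξ a), ?_⟩
  · have hshift : F (ξ (a + j) - intVec t) = F (ξ (a + j)) - intVec t := by
      rw [eq_sub_iff_add_eq, ← hF.2, sub_add_cancel]
    rw [hshift, sub_sub_sub_cancel_right]
    exact hξ (a + j) (by omega)
  · simp

lemma KsetEps_subset_cthickening (hF : IsLift F) (ε : ℝ) {n : ℕ} (hn : 1 ≤ n) :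
    ∃ C : ℝ, ∀ N k, n ≤ N → N ≤ k →
      KsetEps F ε k ⊆ cthickening (2 * n * C / N) (convexHull ℝ (KsetEps F ε n)) := by
  obtain ⟨M, hM⟩ := hF.exists_norm_map_sub_le
  refine ⟨M + ε, fun N k hnN hNk => ?_⟩
  rintro _ ⟨ξ, hξ, -, rfl⟩
  have hstep : ∀ j < k, ‖ξ (j + 1) - ξ j‖ ≤ M + ε := fun j hj =>
    calc ‖ξ (j + 1) - ξ j‖ = ‖(F (ξ j) - ξ j) - (F (ξ j) - ξ (j + 1))‖ := by congr 1; abel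
      _ ≤ M + ε := (norm_sub_le _ _).trans (add_le_add (hM _) (hξ j hj))
  have hC : 0 ≤ M + ε := (norm_nonneg _).trans (hstep 0 (by omega))
  obtain ⟨y, hy, hdist⟩ := exists_mem_convexHull_window_averages hstep hn (hnN.trans hNk)
  have hwindows : {v | ∃ a, a + n ≤ k ∧ v = (n : ℝ)⁻¹ • (ξ (a + n) - ξ a)} ⊆ KsetEps F ε n := by
    rintro _ ⟨a, hak, rfl⟩
    exact hF.window_average_mem_KsetEps hξ hak
  refine mem_cthickening_of_dist_le _ y _ _ (convexHull_mono hwindows hy) ?_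
  rw [dist_eq_norm]
  refine hdist.trans ?_
  have : (0 : ℝ) < N := by exact_mod_cast hn.trans hnN
  gcongr

end IsLift

theorem rotSetEps_subset_convKsetEps_general {m : ℕ} {F : E m → E m} (hF : IsLift F)
    {ε : ℝ} :
    ∀ n : ℕ, 1 ≤ n → rotSetEps F ε ⊆ closure (convexHull ℝ (KsetEps F ε n)) := by
  intro n hn v hv
  obtain ⟨C, hC⟩ := hF.KsetEps_subset_cthickening ε hn
  rw [closure_eq_iInter_cthickening, mem_iInter₂]
  intro δ hδ
  obtain ⟨N, hNδ, hnN⟩ := (((tendsto_const_div_atTop_nhds_zero_nat (2 * n * C)).eventually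
    (eventually_le_nhds hδ)).and (eventually_ge_atTop n)).exists
  have hvN : v ∈ closure (⋃ k ≥ N, KsetEps F ε k) := mem_iInter₂.mp hv N (hn.trans hnN)
  exact cthickening_mono hNδ _ <|
    closure_minimal (iUnion₂_subset fun k hk => hC N k hnN hk) isClosed_cthickening hvN

/-- The ε-rotation set is contained in the closed convex hull of `K_n^ε(F)` for every `n ≥ 1`. -/
theorem rotSetEps_subset_convKsetEps {m : ℕ} {F : E m → E m} (hF : IsLift F)
    {ε : ℝ} (hε : 0 ≤ ε) :
    ∀ n : ℕ, 1 ≤ n → rotSetEps F ε ⊆ closure (convexHull ℝ (KsetEps F ε n)) :=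
  rotSetEps_subset_convKsetEps_general hF
end
end

section
/- Suppose F ∈ H(2) is Lipschitz continuous with Lipschitz constant L > 1, ε > 0, and the algorithm data satisfy Lη ≤ R ≤ ε. Then for every n ∈ ℕ with n ≥ 1: (1/n)·F^n([0,1]²) ⊆ Q_n* ⊆ { ξ_n/n : (ξ_j)_{j=0}^n is a 2ε-pseudo-orbit of F with ξ_0 ∈ [0,1]² }. -/
open Metric Set Pointwise

noncomputable section

def boxes (B0 : Set (Set (E 2))) : Set (Set (E 2)) :=
  {B' | ∃ B ∈ B0, ∃ t : Fin 2 → ℤ, B' = (fun x => x + intVec t) '' B}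

structure AlgoData (ε η R : ℝ) (F : E 2 → E 2) where
  B0 : Set (Set (E 2))
  compact' : ∀ B ∈ B0, IsCompact B
  subCube : ∀ B ∈ B0, B ⊆ cube 2
  small : ∀ B ∈ B0, Metric.diam B ≤ ε
  cover : ⋃₀ B0 = cube 2
  Γ : Set (E 2) → Set (E 2)
  Γ_sub : ∀ B ∈ boxes B0, Γ B ⊆ B
  Γ_fin : ∀ B ∈ boxes B0, (Γ B).Finite
  Γ_dense : ∀ B ∈ boxes B0, ∀ x ∈ B, ∃ y ∈ Γ B, dist x y ≤ η
  Γ_equiv : ∀ B ∈ boxes B0, ∀ t : Fin 2 → ℤ,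
    Γ ((fun x => x + intVec t) '' B) = (fun x => x + intVec t) '' Γ B

variable {ε η R : ℝ} {F : E 2 → E 2}

def boxImage (D : AlgoData ε η R F) (B : Set (E 2)) : Set (Set (E 2)) :=
  {B' | B' ∈ boxes D.B0 ∧ ∃ x ∈ D.Γ B, Metric.infDist (F x) B' ≤ R}

def boxCol (D : AlgoData ε η R F) : ℕ → Set (Set (E 2))
  | 0 => D.B0
  | k + 1 => {B' | ∃ B ∈ boxCol D k, B' ∈ boxImage D B}

def Qset (D : AlgoData ε η R F) : ℕ → Set (E 2)
  | 0 => cube 2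
  | k + 1 => ⋃ B ∈ boxCol D (k + 1), B

def QsetStar (D : AlgoData ε η R F) (n : ℕ) : Set (E 2) :=
  (n : ℝ)⁻¹ • Qset D n

/-! A forward orbit is tracked box by box: if `F^[k] x` lies in a box `B` of generation `k`, a
grid point `y ∈ Γ B` is `η`-close to it, so `F y` is `Lη ≤ R`-close to `F^[k+1] x`, and the box
containing `F^[k+1] x` is in the image of `B`. Conversely, a point of a box `B'` in the image of
`B` lies within `R + diam B' ≤ 2ε` of `F x` for some `x ∈ Γ B ⊆ B`, so following the boxes back
to generation `0` produces a `2ε`-pseudo-orbit ending at that point. -/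

lemma intVec_zero {m : ℕ} : intVec (m := m) 0 = 0 := by
  ext i
  simp [intVec]

lemma isometry_add_intVec {m : ℕ} (t : Fin m → ℤ) : Isometry (fun x : E m => x + intVec t) :=
  Isometry.of_dist_eq fun x y => dist_add_right x y (intVec t)

lemma exists_sub_intVec_mem_cube {m : ℕ} (z : E m) : ∃ t : Fin m → ℤ, z - intVec t ∈ cube m := by
  refine ⟨fun i => ⌊z i⌋, fun i => ?_⟩
  have hfract : (z - intVec fun i => ⌊z i⌋) i = Int.fract (z i) := Int.self_sub_floor (z i)
  rw [hfract]
  exact ⟨Int.fract_nonneg _, (Int.fract_lt_one _).le⟩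

lemma IsPseudoOrbit.update {m : ℕ} {F : E m → E m} {ε : ℝ} {k : ℕ} {ξ : ℕ → E m}
    (hξ : IsPseudoOrbit F ε k ξ) {z : E m} (hz : ‖F (ξ k) - z‖ ≤ ε) :
    IsPseudoOrbit F ε (k + 1) (Function.update ξ (k + 1) z) := by
  intro j hj
  rcases Nat.lt_succ_iff_lt_or_eq.mp hj with hjk | rfl
  · rw [Function.update_of_ne (by omega), Function.update_of_ne (by omega)]
    exact hξ j hjk
  · rwa [Function.update_of_ne (by omega), Function.update_self]

section Boxes

variable {B0 : Set (Set (E 2))} {B : Set (E 2)}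

lemma mem_boxes_of_mem (hB : B ∈ B0) : B ∈ boxes B0 :=
  ⟨B, hB, 0, by simp [intVec_zero]⟩

variable (D : AlgoData ε η R F)

lemma isBounded_of_mem_boxes (hB : B ∈ boxes D.B0) : Bornology.IsBounded B := by
  obtain ⟨B, hB, t, rfl⟩ := hB
  exact ((D.compact' B hB).image (isometry_add_intVec t).continuous).isBounded

lemma diam_le_of_mem_boxes (hB : B ∈ boxes D.B0) : diam B ≤ ε := by
  obtain ⟨B, hB, t, rfl⟩ := hB
  rw [(isometry_add_intVec t).diam_image]
  exact D.small B hB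

lemma exists_mem_boxes (z : E 2) : ∃ B ∈ boxes D.B0, z ∈ B := by
  obtain ⟨t, ht⟩ := exists_sub_intVec_mem_cube z
  rw [← D.cover] at ht
  obtain ⟨B, hB, hzB⟩ := ht
  exact ⟨_, ⟨B, hB, t, rfl⟩, z - intVec t, hzB, sub_add_cancel z (intVec t)⟩

lemma boxCol_subset_boxes : ∀ k, boxCol D k ⊆ boxes D.B0
  | 0 => fun _ => mem_boxes_of_mem
  | _ + 1 => fun _ ⟨_, _, hB'⟩ => hB'.1

lemma mem_Qset_iff {k : ℕ} {z : E 2} : z ∈ Qset D k ↔ ∃ B ∈ boxCol D k, z ∈ B := by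
  cases k with
  | zero => simp only [Qset, boxCol, ← D.cover, mem_sUnion]
  | succ k => simp only [Qset, mem_iUnion₂, exists_prop]

lemma iterate_mem_Qset {L : NNReal} (hL : LipschitzWith L F) (hLη : (L : ℝ) * η ≤ R) :
    ∀ (k : ℕ) {x : E 2}, x ∈ cube 2 → F^[k] x ∈ Qset D k
  | 0, x, hx => hx
  | k + 1, x, hx => by
    obtain ⟨B, hBk, hxB⟩ := (mem_Qset_iff D).1 (iterate_mem_Qset hL hLη k hx)
    obtain ⟨y, hyΓ, hxy⟩ := D.Γ_dense B (boxCol_subset_boxes D k hBk) _ hxB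
    obtain ⟨B', hB', hxB'⟩ := exists_mem_boxes D (F^[k + 1] x)
    refine (mem_Qset_iff D).2 ⟨B', ⟨B, hBk, hB', y, hyΓ, ?_⟩, hxB'⟩
    rw [Function.iterate_succ_apply'] at hxB'
    calc infDist (F y) B' ≤ dist (F y) (F (F^[k] x)) := infDist_le_dist_of_mem hxB'
      _ ≤ L * dist y (F^[k] x) := hL.dist_le_mul _ _
      _ ≤ L * η := by rw [dist_comm] at hxy; gcongr
      _ ≤ R := hLη

lemma exists_pseudoOrbit_of_mem_Qset (hRε : R ≤ ε) :
    ∀ (k : ℕ) {z : E 2}, z ∈ Qset D k →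
      ∃ ξ : ℕ → E 2, IsPseudoOrbit F (2 * ε) k ξ ∧ ξ 0 ∈ cube 2 ∧ ξ k = z
  | 0, z, hz => ⟨fun _ => z, fun _ hj => absurd hj (Nat.not_lt_zero _), hz, rfl⟩
  | k + 1, z, hz => by
    obtain ⟨B', ⟨B, hBk, hB', x, hxΓ, hdist⟩, hzB'⟩ := (mem_Qset_iff D).1 hz
    have hxQ : x ∈ Qset D k :=
      (mem_Qset_iff D).2 ⟨B, hBk, D.Γ_sub B (boxCol_subset_boxes D k hBk) hxΓ⟩
    obtain ⟨ξ, hξ, hξ0, rfl⟩ := exists_pseudoOrbit_of_mem_Qset hRε k hxQ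
    refine ⟨Function.update ξ (k + 1) z, hξ.update ?_, by simpa using hξ0, by simp⟩
    rw [← dist_eq_norm]
    calc dist (F (ξ k)) z ≤ infDist (F (ξ k)) B' + diam B' :=
          dist_le_infDist_add_diam (isBounded_of_mem_boxes D hB') hzB'
      _ ≤ 2 * ε := by linarith [diam_le_of_mem_boxes D hB']

end Boxes

theorem box_overestimation_general {F : E 2 → E 2}
    {L : NNReal} (hL : LipschitzWith L F)
    {ε η R : ℝ}
    (hLη : (L : ℝ) * η ≤ R) (hRε : R ≤ ε)
    (D : AlgoData ε η R F) {n : ℕ} :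
    (n : ℝ)⁻¹ • (F^[n] '' cube 2) ⊆ QsetStar D n ∧
      QsetStar D n ⊆ {v : E 2 | ∃ ξ : ℕ → E 2, IsPseudoOrbit F (2 * ε) n ξ ∧
        ξ 0 ∈ cube 2 ∧ v = (n : ℝ)⁻¹ • ξ n} := by
  refine ⟨Set.smul_set_mono (image_subset_iff.2 fun x => iterate_mem_Qset D hL hLη n), ?_⟩
  rintro _ ⟨z, hz, rfl⟩
  obtain ⟨ξ, hξ, hξ0, rfl⟩ := exists_pseudoOrbit_of_mem_Qset D hRε n hz
  exact ⟨ξ, hξ, hξ0, rfl⟩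

/-- The algorithm overestimates: `(1/n)F^n([0,1]²) ⊆ Q_n* ⊆ {ξ_n/n : (ξ_j) a 2ε-pseudo-orbit}`. -/
theorem box_overestimation {F : E 2 → E 2} (hF : IsHomeoLift F)
    {L : NNReal} (hL : LipschitzWith L F) (hL1 : 1 < L)
    {ε η R : ℝ} (hε : 0 < ε) (hη : 0 < η) (hR : 0 < R)
    (hLη : (L : ℝ) * η ≤ R) (hRε : R ≤ ε)
    (D : AlgoData ε η R F) {n : ℕ} (hn : 1 ≤ n) :
    (n : ℝ)⁻¹ • (F^[n] '' cube 2) ⊆ QsetStar D n ∧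
      QsetStar D n ⊆ {v : E 2 | ∃ ξ : ℕ → E 2, IsPseudoOrbit F (2 * ε) n ξ ∧
        ξ 0 ∈ cube 2 ∧ v = (n : ℝ)⁻¹ • ξ n} :=
  box_overestimation_general hL hLη hRε D
end
end

section
/- Suppose F ∈ H(2) is Lipschitz continuous with Lipschitz constant L > 1 and ε > 0. Then for every n ∈ ℕ with n ≥ 1, d_H(K_n^{2ε}(F), K_n(F)) ≤ 2ε(L^n − 1)/(n(L − 1)). -/
open Metric Set Pointwise

noncomputable section

/-! A pseudo-orbit drifts from the true orbit of its starting point by at most `ε` plus `L` times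
the previous drift at each step, so after `n` steps by at most `ε (1 + L + ⋯ + Lⁿ⁻¹)`. This bounds
every point of `K_n^ε(F)` against the point of `K_n(F)` with the same starting point, while every
true orbit is itself an `ε`-pseudo-orbit. -/

namespace IsPseudoOrbit

variable {m : ℕ} {F : E m → E m} {ε : ℝ}

theorem of_iterate (hε : 0 ≤ ε) (n : ℕ) (x : E m) :
    IsPseudoOrbit F ε n (fun j => F^[j] x) := by
  intro j _
  simpa only [Function.iterate_succ_apply', sub_self, norm_zero] using hε

theorem dist_iterate_le {L : NNReal} (hL : LipschitzWith L F) {n : ℕ} {ξ : ℕ → E m}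
    (hξ : IsPseudoOrbit F ε n ξ) :
    ∀ j ≤ n, dist (ξ j) (F^[j] (ξ 0)) ≤ ε * ∑ i ∈ Finset.range j, (L : ℝ) ^ i := by
  intro j hj
  induction j with
  | zero => simp
  | succ j ih =>
    have hstep : dist (F (ξ j)) (ξ (j + 1)) ≤ ε := by
      simpa only [dist_eq_norm] using hξ j hj
    calc dist (ξ (j + 1)) (F^[j + 1] (ξ 0))
        ≤ dist (F (ξ j)) (ξ (j + 1)) + dist (F (ξ j)) (F (F^[j] (ξ 0))) := by
          rw [Function.iterate_succ_apply']
          exact dist_triangle_left _ _ _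
      _ ≤ ε + L * (ε * ∑ i ∈ Finset.range j, (L : ℝ) ^ i) := by
          gcongr
          exact (hL.dist_le_mul _ _).trans (by gcongr; exact ih (by omega))
      _ = ε * ∑ i ∈ Finset.range (j + 1), (L : ℝ) ^ i := by
          rw [geom_sum_succ]; ring

end IsPseudoOrbit

theorem hausdorffDist_KsetEps_Kset_le {m : ℕ} {F : E m → E m} {L : NNReal}
    (hL : LipschitzWith L F) {ε : ℝ} (hε : 0 ≤ ε) (n : ℕ) :
    hausdorffDist (KsetEps F ε n) (Kset F n) ≤
      (n : ℝ)⁻¹ * (ε * ∑ i ∈ Finset.range n, (L : ℝ) ^ i) := by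
  have hr : 0 ≤ (n : ℝ)⁻¹ * (ε * ∑ i ∈ Finset.range n, (L : ℝ) ^ i) := by positivity
  apply hausdorffDist_le_of_mem_dist hr
  · rintro v ⟨ξ, hξ, hξ0, rfl⟩
    refine ⟨(n : ℝ)⁻¹ • (F^[n] (ξ 0) - ξ 0), ⟨ξ 0, hξ0, rfl⟩, ?_⟩
    rw [dist_smul₀, dist_sub_right, Real.norm_of_nonneg (by positivity)]
    gcongr
    exact hξ.dist_iterate_le hL n le_rfl
  · rintro v ⟨x, hx, rfl⟩
    exact ⟨_, ⟨fun j => F^[j] x, .of_iterate hε n x, hx, rfl⟩, by simpa using hr⟩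

theorem hausdorffDist_KsetEps_Kset_general {F : E 2 → E 2}
    {L : NNReal} (hL : LipschitzWith L F) (hL1 : 1 < L)
    {ε : ℝ} (hε : 0 < ε) {n : ℕ} :
    Metric.hausdorffDist (KsetEps F (2 * ε) n) (Kset F n) ≤
      2 * ε * ((L : ℝ) ^ n - 1) / (n * ((L : ℝ) - 1)) := by
  have hL1' : (L : ℝ) ≠ 1 := (NNReal.coe_lt_coe.mpr hL1).ne'
  calc Metric.hausdorffDist (KsetEps F (2 * ε) n) (Kset F n)
      ≤ (n : ℝ)⁻¹ * (2 * ε * ∑ i ∈ Finset.range n, (L : ℝ) ^ i) :=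
        hausdorffDist_KsetEps_Kset_le hL (by positivity) n
    _ = 2 * ε * ((L : ℝ) ^ n - 1) / (n * ((L : ℝ) - 1)) := by
        rw [geom_sum_eq hL1', div_eq_mul_inv, div_eq_mul_inv, mul_inv]; ring

/-- `d_H(K_n^{2ε}(F), K_n(F)) ≤ 2ε(Lⁿ − 1)/(n(L − 1))`. -/
theorem hausdorffDist_KsetEps_Kset {F : E 2 → E 2} (hF : IsHomeoLift F)
    {L : NNReal} (hL : LipschitzWith L F) (hL1 : 1 < L)
    {ε : ℝ} (hε : 0 < ε) {n : ℕ} (hn : 1 ≤ n) :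
    Metric.hausdorffDist (KsetEps F (2 * ε) n) (Kset F n) ≤
      2 * ε * ((L : ℝ) ^ n - 1) / (n * ((L : ℝ) - 1)) :=
  hausdorffDist_KsetEps_Kset_general hL hL1 hε
end
end

section
/- Let f : 𝕋² → 𝕋² be a homeomorphism of the two-torus homotopic to the identity with lift F ∈ H(2), and let δ, γ ∈ (0, 1/2) be such that d(x,y) < δ implies d(f(x), f(y)) < 1/2 − γ for all x, y ∈ 𝕋². Assume f has the δ-shadowing property with constant ε for some ε ∈ (0, γ). Then F has the δ-shadowing property with constant ε, i.e. every ε-pseudo-orbit (ξ_n)_{n≥0} of F in ℝ² satisfies ‖F^n(x) − ξ_n‖ < δ for all n ≥ 0, for some x ∈ ℝ². -/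
open Metric Set Pointwise

noncomputable section

def lattice2 : AddSubgroup (E 2) :=
  AddSubgroup.closure (Set.range fun t : Fin 2 → ℤ => intVec t)

abbrev Torus2 := E 2 ⧸ lattice2

def pr : E 2 → Torus2 := QuotientAddGroup.mk

/-!
The projection of an ε-pseudo-orbit of `F` is an ε-pseudo-orbit of `f`, and a point of `𝕋²` that
δ-shadows it lifts to a point `x` with `‖x - ξ 0‖ < δ`. Closeness in `𝕋²` only says that
`F^[n] x - ξ n` lies within `δ` of a lattice point, so `F^[n] x - ξ n` is either shorter than `δ` or
longer than `1 - δ`. The hypothesis on `f` makes `F` move points at distance `< δ` to distance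
`< 1/2 - γ` (connectedness of segments rules out jumping over the gap between `1/2 - γ` and
`1/2 + γ`), so the step from `n` to `n + 1` stays below `1/2 - γ + ε < 1 - δ`, and induction on `n`
keeps `‖F^[n] x - ξ n‖ < δ`.
-/

open Function

def HasShadowingProperty {X : Type*} [PseudoMetricSpace X] (g : X → X) (δ ε : ℝ) : Prop :=
  ∀ ξ : ℕ → X, (∀ n, dist (g (ξ n)) (ξ (n + 1)) ≤ ε) → ∃ x, ∀ n, dist (g^[n] x) (ξ n) < δ

theorem IsPreconnected.lt_of_forall_lt_or_lt {X α : Type*} [TopologicalSpace X]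
    [ConditionallyCompleteLinearOrder α] [TopologicalSpace α] [OrderTopology α]
    {S : Set X} (hS : IsPreconnected S) {g : X → α} (hg : ContinuousOn g S) {a b : α}
    (hab : a ≤ b) (hgap : ∀ x ∈ S, g x < a ∨ b < g x) {x y : X} (hx : x ∈ S) (hy : y ∈ S)
    (hxa : g x < a) : g y < a := by
  refine (hgap y hy).resolve_right fun hby => ?_
  obtain ⟨z, hz, hza⟩ := hS.intermediate_value hx hy hg ⟨hxa.le, hab.trans hby.le⟩
  rcases hgap z hz with h | h
  · exact h.ne hza
  · exact (hab.trans_lt h).ne' hza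

section QuotientNorm

variable {V : Type*} [NormedAddCommGroup V] {L : AddSubgroup V}

theorem dist_mk_le_dist (a b : V) : dist (a : V ⧸ L) (b : V ⧸ L) ≤ dist a b := by
  rw [dist_eq_norm, dist_eq_norm, ← QuotientAddGroup.mk_sub]
  exact QuotientAddGroup.norm_mk_le_norm

theorem exists_mk_eq_norm_sub_lt {z : V ⧸ L} {b : V} {r : ℝ} (h : dist z (b : V ⧸ L) < r) :
    ∃ x : V, (x : V ⧸ L) = z ∧ ‖x - b‖ < r := by
  rw [dist_eq_norm, QuotientAddGroup.norm_lt_iff] at h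
  obtain ⟨m, hm, hmr⟩ := h
  refine ⟨m + b, ?_, by rwa [add_sub_cancel_right]⟩
  rw [QuotientAddGroup.mk_add, hm, sub_add_cancel]

theorem norm_lt_or_one_sub_lt_of_norm_mk_lt (hL : ∀ v ∈ L, v ≠ 0 → 1 ≤ ‖v‖) {w : V} {c : ℝ}
    (h : ‖(w : V ⧸ L)‖ < c) : ‖w‖ < c ∨ 1 - c < ‖w‖ := by
  obtain ⟨m, hm, hmc⟩ := QuotientAddGroup.norm_lt_iff.mp h
  have hwm : w - m ∈ L := (QuotientAddGroup.eq_iff_sub_mem).mp hm.symm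
  by_cases h0 : w - m = 0
  · left
    rwa [sub_eq_zero.mp h0]
  · right
    have := hL _ hwm h0
    linarith [norm_sub_le w m]

end QuotientNorm

section Lift

variable {V : Type*} [NormedAddCommGroup V] [NormedSpace ℝ V] {L : AddSubgroup V}
  {F : V → V} {f : V ⧸ L → V ⧸ L}

theorem norm_sub_lt_of_semiconj (hL : ∀ v ∈ L, v ≠ 0 → 1 ≤ ‖v‖) (hF : Continuous F)
    (hFf : Semiconj ((↑) : V → V ⧸ L) F f) {δ c : ℝ} (hc : c ≤ 1 / 2)
    (hexp : ∀ x y, dist x y < δ → dist (f x) (f y) < c) {p q : V} (hpq : ‖p - q‖ < δ) :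
    ‖F p - F q‖ < c := by
  have hgap : ∀ a ∈ segment ℝ q p, ‖F a - F q‖ < c ∨ 1 - c < ‖F a - F q‖ := by
    intro a ha
    refine norm_lt_or_one_sub_lt_of_norm_mk_lt hL ?_
    have haq : dist a q < δ := by
      rw [← dist_eq_norm, dist_comm] at hpq
      linarith [dist_comm a q, dist_add_dist_of_mem_segment ha, dist_nonneg (x := a) (y := p)]
    rw [QuotientAddGroup.mk_sub, ← dist_eq_norm, hFf, hFf]
    exact hexp _ _ ((dist_mk_le_dist a q).trans_lt haq)
  have hq : ‖F q - F q‖ < c := by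
    rcases hgap q (left_mem_segment ℝ q p) with h | h
    · exact h
    · rw [sub_self, norm_zero] at h
      linarith
  exact (convex_segment q p).isPreconnected.lt_of_forall_lt_or_lt
    (by fun_prop) (by linarith) hgap (left_mem_segment ℝ q p) (right_mem_segment ℝ q p) hq

theorem HasShadowingProperty.of_semiconj (hL : ∀ v ∈ L, v ≠ 0 → 1 ≤ ‖v‖) (hF : Continuous F)
    (hFf : Semiconj ((↑) : V → V ⧸ L) F f) {δ c ε : ℝ} (hc : c ≤ 1 / 2) (hcε : c + ε ≤ 1 - δ)
    (hexp : ∀ x y, dist x y < δ → dist (f x) (f y) < c) (hf : HasShadowingProperty f δ ε) :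
    HasShadowingProperty F δ ε := by
  intro ξ hξ
  have hξf : ∀ n, dist (f (ξ n)) (ξ (n + 1) : V ⧸ L) ≤ ε := fun n => by
    rw [← hFf]
    exact (dist_mk_le_dist _ _).trans (hξ n)
  obtain ⟨z, hz⟩ := hf (fun n => ξ n) hξf
  obtain ⟨x, rfl, hx⟩ := exists_mk_eq_norm_sub_lt (hz 0)
  refine ⟨x, fun n => ?_⟩
  rw [dist_eq_norm]
  induction n with
  | zero => exact hx
  | succ n ih =>
    have hclose : ‖((F^[n + 1] x - ξ (n + 1) : V) : V ⧸ L)‖ < δ := by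
      rw [QuotientAddGroup.mk_sub, ← dist_eq_norm, (hFf.iterate_right (n + 1)) x]
      exact hz (n + 1)
    have hstep : ‖F (F^[n] x) - F (ξ n)‖ < c := norm_sub_lt_of_semiconj hL hF hFf hc hexp ih
    have hξn : ‖F (ξ n) - ξ (n + 1)‖ ≤ ε := dist_eq_norm (F (ξ n)) _ ▸ hξ n
    have hfar : ‖F^[n + 1] x - ξ (n + 1)‖ < 1 - δ := by
      rw [iterate_succ_apply']
      linarith [norm_sub_le_norm_sub_add_norm_sub (F (F^[n] x)) (F (ξ n)) (ξ (n + 1))]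
    exact (norm_lt_or_one_sub_lt_of_norm_mk_lt hL hclose).resolve_right hfar.not_gt

end Lift

theorem exists_int_eq_apply_of_mem_lattice2 {v : E 2} (hv : v ∈ lattice2) (i : Fin 2) :
    ∃ k : ℤ, v i = k := by
  induction hv using AddSubgroup.closure_induction with
  | mem _ h =>
    obtain ⟨t, rfl⟩ := h
    exact ⟨t i, rfl⟩
  | zero => exact ⟨0, by simp⟩
  | add _ _ _ _ h₁ h₂ =>
    obtain ⟨k₁, hk₁⟩ := h₁
    obtain ⟨k₂, hk₂⟩ := h₂
    exact ⟨k₁ + k₂, by simp [hk₁, hk₂]⟩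
  | neg _ _ h =>
    obtain ⟨k, hk⟩ := h
    exact ⟨-k, by simp [hk]⟩

theorem one_le_norm_of_mem_lattice2 {v : E 2} (hv : v ∈ lattice2) (hv0 : v ≠ 0) : 1 ≤ ‖v‖ := by
  obtain ⟨i, hi⟩ : ∃ i, v i ≠ 0 := by
    by_contra! h
    exact hv0 (PiLp.ext h)
  obtain ⟨k, hk⟩ := exists_int_eq_apply_of_mem_lattice2 hv i
  have hk0 : k ≠ 0 := by rintro rfl; simp [hk] at hi
  calc (1 : ℝ) ≤ |(k : ℝ)| := by exact_mod_cast Int.one_le_abs hk0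
    _ = ‖v i‖ := by rw [hk, Real.norm_eq_abs]
    _ ≤ ‖v‖ := PiLp.norm_apply_le v i

/-- If the torus homeomorphism `f` has the δ-shadowing property with constant ε
(under the stated expansivity bound), then so does its lift `F`. -/
theorem lift_shadowing {F : E 2 → E 2} (hF : IsHomeoLift F) (f : Torus2 ≃ₜ Torus2)
    (hlift : ∀ x : E 2, pr (F x) = f (pr x))
    {δ γ : ℝ} (hδ : δ ∈ Set.Ioo (0 : ℝ) (1 / 2)) (hγ : γ ∈ Set.Ioo (0 : ℝ) (1 / 2))
    (hexp : ∀ x y : Torus2, dist x y < δ → dist (f x) (f y) < 1 / 2 - γ)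
    {ε : ℝ} (hε : ε ∈ Set.Ioo 0 γ)
    (hshadow : ∀ ξ : ℕ → Torus2, (∀ n : ℕ, dist (f (ξ n)) (ξ (n + 1)) ≤ ε) →
      ∃ z : Torus2, ∀ n : ℕ, dist ((⇑f)^[n] z) (ξ n) < δ) :
    ∀ ξ : ℕ → E 2, (∀ n : ℕ, ‖F (ξ n) - ξ (n + 1)‖ ≤ ε) →
      ∃ x : E 2, ∀ n : ℕ, ‖F^[n] x - ξ n‖ < δ := by
  have hF_shadow : HasShadowingProperty F δ ε :=
    HasShadowingProperty.of_semiconj (fun _ => one_le_norm_of_mem_lattice2) hF.1.1 hlift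
      (by linarith [hγ.1]) (by linarith [hδ.2, hε.2]) hexp hshadow
  simpa only [HasShadowingProperty, dist_eq_norm] using hF_shadow
end
end

section
/- Let f : 𝕋² → 𝕋² be a homeomorphism of the two-torus homotopic to the identity with lift F ∈ H(2), and let δ, γ ∈ (0, 1/2) be such that d(x,y) < δ implies d(f(x), f(y)) < 1/2 − γ for all x, y ∈ 𝕋². Assume f has the δ-shadowing property with constant ε for some ε ∈ (0, γ). Then the ε-rotation set equals the rotation set: ρ_ε(F) = ρ(F). -/
open Metric Set Pointwise

noncomputable section

/-!
Orbits are pseudo-orbits, so `ρ(F) ⊆ ρ_ε(F)`. Conversely, continue a finite ε-pseudo-orbit of `F`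
by a genuine orbit, project it to `𝕋²` and shadow it there. By connectedness, `δ`-close points of
`ℝ²` have images less than `1/2 - γ` apart, so with `ε < γ` the lift of the shadowing orbit that
starts `δ`-close to `ξ₀` cannot switch to another lattice translate of the pseudo-orbit: it stays
`δ`-close to it in `ℝ²`. Hence `K_k^ε(F)` lies in the `2δ/k`-neighbourhood of `K_k(F)`, and the
two limit sets agree.
-/

open Filter Function Topology

theorem pr_sub (x y : E 2) : pr x - pr y = pr (x - y) := rfl

theorem dist_pr_le (x y : E 2) : dist (pr x) (pr y) ≤ ‖x - y‖ := by
  rw [dist_eq_norm, pr_sub]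
  exact QuotientAddGroup.norm_mk_le_norm

theorem exists_pr_eq_of_dist_lt {z : Torus2} {y : E 2} {r : ℝ} (h : dist z (pr y) < r) :
    ∃ x, pr x = z ∧ ‖x - y‖ < r := by
  obtain ⟨x₀, rfl⟩ : ∃ x₀, pr x₀ = z := QuotientAddGroup.mk_surjective z
  obtain ⟨w, hw, hwr⟩ := QuotientAddGroup.norm_lt_iff.mp (by rwa [dist_eq_norm] at h)
  exact ⟨w + y, by rw [← sub_add_cancel (pr x₀) (pr y), ← hw]; rfl, by simpa using hwr⟩

def intVecHom (m : ℕ) : (Fin m → ℤ) →+ E m where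
  toFun := intVec
  map_zero' := by ext; simp [intVec]
  map_add' _ _ := by ext; simp [intVec]

theorem lattice2_eq_range : lattice2 = (intVecHom 2).range := by
  rw [lattice2, ← AddSubgroup.closure_eq (intVecHom 2).range]
  rfl

theorem one_le_norm_of_mem_lattice2_s16 {s : E 2} (hs : s ∈ lattice2) (h0 : s ≠ 0) : 1 ≤ ‖s‖ := by
  obtain ⟨t, rfl⟩ : ∃ t, intVec t = s := by rwa [lattice2_eq_range] at hs
  obtain ⟨i, hi⟩ : ∃ i, t i ≠ 0 := by
    by_contra! h
    exact h0 (by ext i; simp [intVec, h i])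
  calc (1 : ℝ) ≤ |(t i : ℝ)| := by exact_mod_cast Int.one_le_abs hi
    _ ≤ ‖intVec t‖ := by simpa [intVec] using PiLp.norm_apply_le (intVec t) i

theorem norm_lt_of_norm_pr_lt {v : E 2} {c : ℝ} (hv : ‖v‖ + c ≤ 1) (h : ‖pr v‖ < c) :
    ‖v‖ < c := by
  obtain ⟨w, hw, hwc⟩ := QuotientAddGroup.norm_lt_iff.mp h
  have hmem : w - v ∈ lattice2 := QuotientAddGroup.eq_iff_sub_mem.mp hw
  by_cases hwv : w - v = 0
  · rwa [← sub_eq_zero.mp hwv]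
  · have := one_le_norm_of_mem_lattice2_s16 hmem hwv
    linarith [norm_sub_le w v]

theorem IsPreconnected.norm_lt_of_norm_pr_lt {X : Type*} [TopologicalSpace X] {s : Set X}
    (hs : IsPreconnected s) {g : X → E 2} (hg : Continuous g) {c : ℝ} (hc : c ≤ 1 / 2)
    (hpr : ∀ x ∈ s, ‖pr (g x)‖ < c) {x₀ : X} (hx₀ : x₀ ∈ s) (h₀ : ‖g x₀‖ < c) :
    ∀ x ∈ s, ‖g x‖ < c := by
  have hcover : s ⊆ {x | ‖g x‖ < c} ∪ {x | c < ‖g x‖} := fun x hx => by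
    rcases lt_trichotomy ‖g x‖ c with hlt | heq | hgt
    · exact Or.inl hlt
    · exact absurd heq (_root_.norm_lt_of_norm_pr_lt (by linarith) (hpr x hx)).ne
    · exact Or.inr hgt
  exact hs.subset_left_of_subset_union (isOpen_lt hg.norm continuous_const)
    (isOpen_lt continuous_const hg.norm) (disjoint_left.mpr fun _ h h' => lt_asymm (α := ℝ) h h')
    hcover ⟨x₀, hx₀, h₀⟩

theorem norm_map_sub_lt_of_norm_sub_lt {F : E 2 → E 2} (hF : Continuous F)
    {f : Torus2 → Torus2} (hlift : Semiconj pr F f) {δ c : ℝ} (hc : c ≤ 1 / 2)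
    (hexp : ∀ x y : Torus2, dist x y < δ → dist (f x) (f y) < c) {a b : E 2}
    (hab : ‖b - a‖ < δ) : ‖F b - F a‖ < c := by
  have hδ : 0 < δ := (norm_nonneg _).trans_lt hab
  have hpr : ∀ x ∈ ball a δ, ‖pr (F x - F a)‖ < c := fun x hx => by
    rw [← pr_sub, ← dist_eq_norm, hlift, hlift]
    exact hexp _ _ ((dist_pr_le x a).trans_lt (mem_ball_iff_norm.mp hx))
  have h₀ : ‖F a - F a‖ < c := by
    simpa using hexp (pr a) (pr a) (by simpa using hδ)
  exact (convex_ball a δ).isPreconnected.norm_lt_of_norm_pr_lt (hF.sub continuous_const) hc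
    hpr (mem_ball_self hδ) h₀ b (mem_ball_iff_norm.mpr hab)

theorem exists_norm_iterate_sub_lt {F : E 2 → E 2} (hF : Continuous F)
    {f : Torus2 → Torus2} (hlift : Semiconj pr F f) {δ c ε : ℝ} (hδ : δ ≤ 1 / 2)
    (hε : 0 ≤ ε) (hcε : c + ε ≤ 1 / 2)
    (hexp : ∀ x y : Torus2, dist x y < δ → dist (f x) (f y) < c)
    (hshadow : ∀ ξ : ℕ → Torus2, (∀ n : ℕ, dist (f (ξ n)) (ξ (n + 1)) ≤ ε) →
      ∃ z : Torus2, ∀ n : ℕ, dist (f^[n] z) (ξ n) < δ)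
    {ξ : ℕ → E 2} (hξ : ∀ n, ‖F (ξ n) - ξ (n + 1)‖ ≤ ε) :
    ∃ x : E 2, ∀ n, ‖F^[n] x - ξ n‖ < δ := by
  obtain ⟨z, hz⟩ := hshadow (pr ∘ ξ) fun n => by
    rw [comp_apply, comp_apply, ← hlift]
    exact (dist_pr_le _ _).trans (hξ n)
  obtain ⟨x, rfl, hx⟩ := exists_pr_eq_of_dist_lt (hz 0)
  refine ⟨x, fun n => ?_⟩
  induction n with
  | zero => exact hx
  | succ n ih =>
    have hhalf : ‖F^[n + 1] x - ξ (n + 1)‖ < 1 / 2 := calc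
      _ ≤ ‖F (F^[n] x) - F (ξ n)‖ + ‖F (ξ n) - ξ (n + 1)‖ := by
        rw [iterate_succ_apply']
        exact norm_sub_le_norm_sub_add_norm_sub _ _ _
      _ < c + ε := add_lt_add_of_lt_of_le
        (norm_map_sub_lt_of_norm_sub_lt hF hlift (by linarith) hexp ih) (hξ n)
      _ ≤ 1 / 2 := hcε
    refine norm_lt_of_norm_pr_lt (by linarith) ?_
    rw [← pr_sub, ← dist_eq_norm, (hlift.iterate_right (n + 1)).eq]
    exact hz (n + 1)

theorem IsPseudoOrbit.exists_extension {m : ℕ} {F : E m → E m} {ε : ℝ} {k : ℕ} {ξ : ℕ → E m}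
    (hξ : IsPseudoOrbit F ε k ξ) (hε : 0 ≤ ε) :
    ∃ ξ' : ℕ → E m, (∀ n, ‖F (ξ' n) - ξ' (n + 1)‖ ≤ ε) ∧ ∀ j ≤ k, ξ' j = ξ j := by
  refine ⟨fun j => F^[j - k] (ξ (min j k)), fun n => ?_, fun j hj => by
    simp [Nat.sub_eq_zero_of_le hj, min_eq_left hj]⟩
  rcases lt_or_ge n k with hn | hn
  · simpa [Nat.sub_eq_zero_of_le hn.le, Nat.sub_eq_zero_of_le hn, min_eq_left hn.le,
      min_eq_left (Nat.succ_le_of_lt hn)] using hξ n hn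
  · simpa [min_eq_right hn, min_eq_right (hn.trans n.le_succ), Nat.succ_sub hn,
      iterate_succ_apply'] using hε

theorem exists_add_intVec_mem_cube {m : ℕ} (x : E m) : ∃ t : Fin m → ℤ, x + intVec t ∈ cube m :=
  ⟨fun i => -⌊x i⌋, fun i => by
    simp [intVec, ← sub_eq_add_neg, Int.fract_nonneg, (Int.fract_lt_one _).le]⟩

theorem IsLift.iterate_add_intVec {m : ℕ} {F : E m → E m} (hF : IsLift F) (n : ℕ) (x : E m)
    (t : Fin m → ℤ) : F^[n] (x + intVec t) = F^[n] x + intVec t := by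
  induction n with
  | zero => rfl
  | succ n ih => rw [iterate_succ_apply', iterate_succ_apply', ih, hF.2]

theorem IsLift.smul_iterate_sub_mem_Kset {m : ℕ} {F : E m → E m} (hF : IsLift F) (k : ℕ)
    (x : E m) : (k : ℝ)⁻¹ • (F^[k] x - x) ∈ Kset F k := by
  obtain ⟨t, ht⟩ := exists_add_intVec_mem_cube x
  exact ⟨x + intVec t, ht, by rw [hF.iterate_add_intVec, add_sub_add_right_eq_sub]⟩

theorem Kset_subset_KsetEps {m : ℕ} (F : E m → E m) {ε : ℝ} (hε : 0 ≤ ε) (k : ℕ) :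
    Kset F k ⊆ KsetEps F ε k := by
  rintro _ ⟨x, hx, rfl⟩
  exact ⟨fun j => F^[j] x, fun j _ => by simpa [iterate_succ_apply'] using hε, hx, rfl⟩

theorem rotSet_subset_rotSetEps {m : ℕ} (F : E m → E m) {ε : ℝ} (hε : 0 ≤ ε) :
    rotSet F ⊆ rotSetEps F ε :=
  iInter₂_mono fun _ _ => closure_mono <| iUnion₂_mono fun k _ => Kset_subset_KsetEps F hε k

theorem exists_mem_Kset_dist_le_of_mem_KsetEps {F : E 2 → E 2} (hF : IsLift F)
    {f : Torus2 → Torus2} (hlift : Semiconj pr F f) {δ c ε : ℝ} (hδ : δ ≤ 1 / 2)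
    (hε : 0 ≤ ε) (hcε : c + ε ≤ 1 / 2)
    (hexp : ∀ x y : Torus2, dist x y < δ → dist (f x) (f y) < c)
    (hshadow : ∀ ξ : ℕ → Torus2, (∀ n : ℕ, dist (f (ξ n)) (ξ (n + 1)) ≤ ε) →
      ∃ z : Torus2, ∀ n : ℕ, dist (f^[n] z) (ξ n) < δ)
    {k : ℕ} {v : E 2} (hv : v ∈ KsetEps F ε k) : ∃ u ∈ Kset F k, dist v u ≤ 2 * δ / k := by
  obtain ⟨ξ, hξ, -, rfl⟩ := hv
  obtain ⟨ξ', hξ', hξξ'⟩ := hξ.exists_extension hε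
  obtain ⟨x, hx⟩ := exists_norm_iterate_sub_lt hF.1 hlift hδ hε hcε hexp hshadow hξ'
  refine ⟨_, hF.smul_iterate_sub_mem_Kset k x, ?_⟩
  have hdiff : ‖ξ k - ξ 0 - (F^[k] x - x)‖ ≤ 2 * δ := calc
    _ = ‖(x - ξ 0) - (F^[k] x - ξ k)‖ := by congr 1; abel
    _ ≤ ‖x - ξ 0‖ + ‖F^[k] x - ξ k‖ := norm_sub_le _ _
    _ ≤ 2 * δ := by
      have h0 : ‖x - ξ' 0‖ < δ := hx 0
      have hk := hx k
      rw [hξξ' 0 k.zero_le] at h0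
      rw [hξξ' k le_rfl] at hk
      linarith
  rw [dist_eq_norm, ← smul_sub, norm_smul, norm_inv, Real.norm_natCast, div_eq_inv_mul]
  gcongr

theorem iInter_closure_iUnion_subset_of_dist_le {X : Type*} [PseudoMetricSpace X]
    {A B : ℕ → Set X} {r : ℕ → ℝ} (hr : Tendsto r atTop (𝓝 0))
    (hAB : ∀ k, ∀ v ∈ B k, ∃ u ∈ A k, dist v u ≤ r k) :
    ⋂ n ≥ 1, closure (⋃ k ≥ n, B k) ⊆ ⋂ n ≥ 1, closure (⋃ k ≥ n, A k) := by
  simp only [subset_def, mem_iInter₂, Metric.mem_closure_iff, mem_iUnion₂]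
  intro v hv n hn η hη
  obtain ⟨N, hN⟩ := eventually_atTop.mp (hr.eventually (gt_mem_nhds (half_pos hη)))
  obtain ⟨w, ⟨k, hk, hw⟩, hvw⟩ := hv (max n N) (le_max_of_le_left hn) _ (half_pos hη)
  obtain ⟨u, hu, hwu⟩ := hAB k w hw
  refine ⟨u, ⟨k, (le_max_left n N).trans hk, hu⟩, ?_⟩
  linarith [dist_triangle v w u, hN k ((le_max_right n N).trans hk)]

theorem shadowing_epsRotSet_eq_rotSet_general {F : E 2 → E 2} (hF : IsHomeoLift F)
    (f : Torus2 ≃ₜ Torus2)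
    (hlift : ∀ x : E 2, pr (F x) = f (pr x))
    {δ γ : ℝ} (hδ : δ ∈ Set.Ioo (0 : ℝ) (1 / 2))
    (hexp : ∀ x y : Torus2, dist x y < δ → dist (f x) (f y) < 1 / 2 - γ)
    {ε : ℝ} (hε : ε ∈ Set.Ioo 0 γ)
    (hshadow : ∀ ξ : ℕ → Torus2, (∀ n : ℕ, dist (f (ξ n)) (ξ (n + 1)) ≤ ε) →
      ∃ z : Torus2, ∀ n : ℕ, dist ((⇑f)^[n] z) (ξ n) < δ) :
    rotSetEps F ε = rotSet F := by
  have hcε : 1 / 2 - γ + ε ≤ 1 / 2 := by linarith [hε.2]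
  refine Subset.antisymm ?_ (rotSet_subset_rotSetEps F hε.1.le)
  exact iInter_closure_iUnion_subset_of_dist_le (tendsto_const_div_atTop_nhds_zero_nat (2 * δ))
    fun _ _ hv => exists_mem_Kset_dist_le_of_mem_KsetEps hF.1 hlift hδ.2.le hε.1.le hcε hexp
      hshadow hv

/-- If the torus homeomorphism `f` has the δ-shadowing property with constant ε
(under the stated expansivity bound), then the ε-rotation set of the lift equals
the rotation set. -/
theorem shadowing_epsRotSet_eq_rotSet {F : E 2 → E 2} (hF : IsHomeoLift F)
    (f : Torus2 ≃ₜ Torus2)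
    (hlift : ∀ x : E 2, pr (F x) = f (pr x))
    {δ γ : ℝ} (hδ : δ ∈ Set.Ioo (0 : ℝ) (1 / 2)) (hγ : γ ∈ Set.Ioo (0 : ℝ) (1 / 2))
    (hexp : ∀ x y : Torus2, dist x y < δ → dist (f x) (f y) < 1 / 2 - γ)
    {ε : ℝ} (hε : ε ∈ Set.Ioo 0 γ)
    (hshadow : ∀ ξ : ℕ → Torus2, (∀ n : ℕ, dist (f (ξ n)) (ξ (n + 1)) ≤ ε) →
      ∃ z : Torus2, ∀ n : ℕ, dist ((⇑f)^[n] z) (ξ n) < δ) :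
    rotSetEps F ε = rotSet F :=
  shadowing_epsRotSet_eq_rotSet_general hF f hlift hδ hexp hε hshadow
end
end
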